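/- For every integer n ≥ 1, every guess g ∈ G and every candidate set C ⊆ S, V_n(g,C) ≤ V_{n+2}(g,C) ≤ V*(g,C). -/

import Mathlib

/-!
Formalization of guessing games (Wordle-style), following the paper's definitions:
guesses `G`, secrets `S ⊆ G`, responses `R` with `|R| > 1`, affirmative response
`r* ∈ R`, and an answering function `a` with `a(g,s) = r* ↔ g = s`.
-/

structure GuessingGame (α ρ : Type*) [DecidableEq α] [DecidableEq ρ] where
  G : Finset α
  S : Finset α
  R : Finset ρ
  rstar : ρ
  ans : α → α → ρ
  S_subset_G : S ⊆ G
  one_lt_card_R : 1 < R.card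
  rstar_mem : rstar ∈ R
  ans_mem : ∀ g ∈ G, ∀ s ∈ S, ans g s ∈ R
  ans_eq_rstar_iff : ∀ g ∈ G, ∀ s ∈ S, (ans g s = rstar ↔ g = s)

namespace GuessingGame

variable {α ρ : Type*} [DecidableEq α] [DecidableEq ρ] (gm : GuessingGame α ρ)

/-- The split `C_{g,r} = {c ∈ C : a(g,c) = r}`. -/
def split (C : Finset α) (g : α) (r : ρ) : Finset α :=
  C.filter fun c => gm.ans g c = r

/-- `nSplits(g,C) = |{r ∈ R : C_{g,r} ≠ ∅}|`. -/
def nSplits (g : α) (C : Finset α) : ℕ :=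
  (gm.R.filter fun r => (gm.split C g r).Nonempty).card

/-- The useful guesses `UG(C)`: for `|C| > 1` the guesses `g ∈ G` with
`nSplits(g,C) ≠ 1`; for `|C| ≤ 1`, `UG(C) = C`. -/
def UG (C : Finset α) : Finset α :=
  if 1 < C.card then gm.G.filter fun g => gm.nSplits g C ≠ 1 else C

/-- `MaxSplits(C) = max_{g ∈ G} nSplits(g,C)`. -/
def MaxSplits (C : Finset α) : ℕ :=
  gm.G.sup fun g => gm.nSplits g C

end GuessingGame

/-- `Bound(n,b)`: `Bound(0,b) = 0`, `Bound(n,1) = n(n+1)/2`, and for `n > 0`, `b > 1`,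
`Bound(n,b) = Σ_{i=1}^{k} i·b^{i-1} + (k+1)·(n - (b^k - 1)/(b-1))` where
`k = ⌊log_b (n(b-1)+1)⌋`. -/
def Bound (n b : ℕ) : ℕ :=
  if n = 0 then 0
  else if b = 1 then n * (n + 1) / 2
  else
    (∑ i ∈ Finset.range (Nat.log b (n * (b - 1) + 1)), (i + 1) * b ^ i) +
      (Nat.log b (n * (b - 1) + 1) + 1) *
        (n - (b ^ Nat.log b (n * (b - 1) + 1) - 1) / (b - 1))

namespace GuessingGame

variable {α ρ : Type*} [DecidableEq α] [DecidableEq ρ] (gm : GuessingGame α ρ)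

/-- Fuel-based implementation of the well-founded recursion defining `MinTotal`:
`MinTotal(∅) = 0` and for nonempty `C`,
`MinTotal(C) = min_{g ∈ UG(C)} (|C| + Σ_{r ∈ R \ {r*}} MinTotal(C_{g,r}))`.
Fuel `|C|` suffices since for a useful guess every split is a proper subset of `C`. -/
noncomputable def MinTotalAux : ℕ → Finset α → ℕ
  | 0, _ => 0
  | n + 1, C =>
    if C = ∅ then 0
    else
      sInf (↑((gm.UG C).image fun g =>
        C.card + ∑ r ∈ gm.R.erase gm.rstar, MinTotalAux n (gm.split C g r)) : Set ℕ)

/-- `MinTotal(C)`. -/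
noncomputable def MinTotal (C : Finset α) : ℕ :=
  gm.MinTotalAux C.card C

/-- `V*(g,C) = |C| + Σ_{r ∈ R \ {r*}} MinTotal(C_{g,r})`. -/
noncomputable def Vstar (g : α) (C : Finset α) : ℕ :=
  C.card + ∑ r ∈ gm.R.erase gm.rstar, gm.MinTotal (gm.split C g r)

/-- The lower bounds `LB_i` (`i ≥ 1`; `LB 0` is junk):
`LB_1(C) = Bound(|C|, MaxSplits(S))`, `LB_2(C) = Bound(|C|, MaxSplits(C))`, and for
`i ≥ 1`, `LB_{i+2}(∅) = 0` and `LB_{i+2}(C) = min_{g ∈ UG(C)} V_i(g,C)` for nonempty `C`,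
where `V_i(g,C) = |C| + Σ_{r ∈ R \ {r*}} LB_i(C_{g,r})`. -/
noncomputable def LB : ℕ → Finset α → ℕ
  | 0, _ => 0
  | 1, C => Bound C.card (gm.MaxSplits gm.S)
  | 2, C => Bound C.card (gm.MaxSplits C)
  | n + 3, C =>
    if C = ∅ then 0
    else
      sInf (↑((gm.UG C).image fun g =>
        C.card + ∑ r ∈ gm.R.erase gm.rstar, LB (n + 1) (gm.split C g r)) : Set ℕ)

/-- `V_i(g,C) = |C| + Σ_{r ∈ R \ {r*}} LB_i(C_{g,r})`. -/
noncomputable def V (i : ℕ) (g : α) (C : Finset α) : ℕ :=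
  C.card + ∑ r ∈ gm.R.erase gm.rstar, gm.LB i (gm.split C g r)

end GuessingGame

/-!
`Bound n b` is the total depth of the first `n` nodes of the complete `b`-ary tree. Hanging at
most `b` trees below a root deepens each of their nodes by one, so `Bound n b` is at most `n` plus
the bounds of the parts of any split of `n` (or `n - 1`) into at most `b` pieces. For a guess this
is `LB_i ≤ V_i` at `i = 1, 2`, and the recursion carries it over to `LB_i ≤ LB_{i+2}` for all `i`.
Since `LB_{i+2}` and `MinTotal` are the same minimum over useful guesses, whose non-affirmative
splits are strictly smaller, induction on `|C|` gives `LB_i ≤ MinTotal`.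
-/

open Finset

theorem Finset.sum_range_card_le_sum {M : Type*} [AddCommMonoid M] [PartialOrder M]
    [IsOrderedAddMonoid M] {f : ℕ → M} (hf : Monotone f) (T : Finset ℕ) :
    ∑ j ∈ range #T, f j ≤ ∑ j ∈ T, f j := by
  have hcard : #(range #T \ T) = #(T \ range #T) := card_sdiff_comm (card_range _)
  calc ∑ j ∈ range #T, f j
      = ∑ j ∈ T ∩ range #T, f j + ∑ j ∈ range #T \ T, f j := by
        rw [inter_comm, sum_inter_add_sum_sdiff]
    _ ≤ ∑ j ∈ T ∩ range #T, f j + #(T \ range #T) • f #T := by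
        rw [← hcard]
        gcongr
        exact sum_le_card_nsmul _ _ _ fun j hj =>
          hf (mem_range.1 (mem_sdiff.1 hj).1).le
    _ ≤ ∑ j ∈ T ∩ range #T, f j + ∑ j ∈ T \ range #T, f j := by
        gcongr
        exact card_nsmul_le_sum _ _ _ fun j hj =>
          hf (not_lt.1 (mt mem_range.2 (mem_sdiff.1 hj).2))
    _ = ∑ j ∈ T, f j := sum_inter_add_sum_sdiff _ _ _

theorem Finset.exists_injOn_lt_of_card_le {ι : Type*} {s : Finset ι} {b : ℕ} (h : #s ≤ b) :
    ∃ f : ι → ℕ, Set.InjOn f s ∧ ∀ r ∈ s, f r < b := by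
  classical
  refine ⟨fun r => if hr : r ∈ s then s.equivFin ⟨r, hr⟩ else 0, ?_, ?_⟩
  · intro r hr r' hr' hrr'
    simp only [mem_coe] at hr hr'
    simp only [dif_pos hr, dif_pos hr'] at hrr'
    exact congrArg Subtype.val (s.equivFin.injective (Fin.ext hrr'))
  · intro r hr
    simp only [dif_pos hr]
    exact (Fin.is_lt _).trans_le h

namespace CompleteTree

/-- Number the nodes of the complete `b`-ary tree breadth-first from `0`, the root having depth
`1`: then `nodesUpTo b t` nodes have depth at most `t`, and node `j` has depth `depth b j`. -/
def nodesUpTo (b t : ℕ) : ℕ := ∑ i ∈ range t, b ^ i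

def depth (b j : ℕ) : ℕ := if b = 1 then j + 1 else Nat.log b (j * (b - 1) + 1) + 1

def depthSum (b n : ℕ) : ℕ := ∑ j ∈ range n, depth b j

lemma nodesUpTo_succ (b t : ℕ) : nodesUpTo b (t + 1) = nodesUpTo b t + b ^ t :=
  sum_range_succ _ _

variable {b : ℕ}

lemma nodesUpTo_mono_left {b' : ℕ} (h : b' ≤ b) (t : ℕ) : nodesUpTo b' t ≤ nodesUpTo b t :=
  sum_le_sum fun i _ => Nat.pow_le_pow_left h i

lemma sub_one_mul_nodesUpTo_add_one (hb : 1 ≤ b) (t : ℕ) :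
    (b - 1) * nodesUpTo b t + 1 = b ^ t := by
  have h := geom_sum_mul_add (b - 1) t
  rw [Nat.sub_add_cancel hb] at h
  rw [nodesUpTo, ← h, mul_comm]

lemma depth_le_iff (hb : 1 ≤ b) {j t : ℕ} : depth b j ≤ t ↔ j < nodesUpTo b t := by
  rcases hb.eq_or_lt with rfl | hb
  · simp [depth, nodesUpTo]
  rw [depth, if_neg hb.ne', Nat.succ_le_iff, Nat.log_lt_iff_lt_pow hb (by omega),
    ← sub_one_mul_nodesUpTo_add_one hb.le, add_lt_add_iff_right, mul_comm,
    Nat.mul_lt_mul_left (by omega)]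

lemma lt_nodesUpTo_depth (hb : 1 ≤ b) (j : ℕ) : j < nodesUpTo b (depth b j) :=
  (depth_le_iff hb).1 le_rfl

lemma depth_eq_of_mem (hb : 1 ≤ b) {t j : ℕ} (h₁ : nodesUpTo b t ≤ j)
    (h₂ : j < nodesUpTo b (t + 1)) : depth b j = t + 1 :=
  le_antisymm ((depth_le_iff hb).2 h₂) (Nat.succ_le_of_lt (lt_of_not_ge
    fun h => (depth_le_iff hb |>.1 h).not_ge h₁))

lemma depth_zero : depth b 0 = 1 := by
  unfold depth; split_ifs <;> simp

lemma depth_mono (hb : 1 ≤ b) : Monotone (depth b) := fun _ j hij =>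
  (depth_le_iff hb).2 (hij.trans_lt (lt_nodesUpTo_depth hb j))

lemma depth_anti_left {b' : ℕ} (hb' : 1 ≤ b') (h : b' ≤ b) (j : ℕ) : depth b j ≤ depth b' j :=
  (depth_le_iff (hb'.trans h)).2
    ((lt_nodesUpTo_depth hb' j).trans_le (nodesUpTo_mono_left h _))

/-- The children of node `i` are the nodes `1 + i * b + p` with `p < b`. -/
lemma depth_child_le (hb : 1 ≤ b) (i : ℕ) {p : ℕ} (hp : p < b) :
    depth b (1 + i * b + p) ≤ depth b i + 1 := by
  rw [depth_le_iff hb, nodesUpTo, geom_sum_succ, ← nodesUpTo]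
  have h := Nat.mul_le_mul_left b (lt_nodesUpTo_depth hb i)
  nlinarith

lemma depthSum_eq_add (hb : 1 ≤ b) {t n : ℕ} (h₁ : nodesUpTo b t ≤ n)
    (h₂ : n ≤ nodesUpTo b (t + 1)) :
    depthSum b n = depthSum b (nodesUpTo b t) + (t + 1) * (n - nodesUpTo b t) := by
  rw [depthSum, depthSum, ← sum_range_add_sum_Ico _ h₁,
    sum_congr rfl fun j hj => depth_eq_of_mem hb (mem_Ico.1 hj).1
      ((mem_Ico.1 hj).2.trans_le h₂),
    sum_const, Nat.card_Ico, smul_eq_mul, mul_comm]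

lemma depthSum_nodesUpTo (hb : 1 ≤ b) (t : ℕ) :
    depthSum b (nodesUpTo b t) = ∑ i ∈ range t, (i + 1) * b ^ i := by
  induction t with
  | zero => rfl
  | succ t ih =>
    rw [depthSum_eq_add hb (nodesUpTo_succ b t ▸ Nat.le_add_right _ _) le_rfl, ih,
      nodesUpTo_succ, Nat.add_sub_cancel_left, sum_range_succ]

lemma depthSum_one (n : ℕ) : depthSum 1 n = n * (n + 1) / 2 := by
  have h := sum_range_id_mul_two (n + 1)
  rw [sum_range_succ', add_zero, Nat.add_sub_cancel, mul_comm (n + 1)] at h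
  simp only [depthSum, depth, if_true]
  omega

/-- Hang the trees with `m r` nodes below distinct children `f r` of the root: node `i` of tree
`r` becomes node `1 + i * b + f r`, at most one level deeper than before. -/
lemma exists_nodes_below_root (hb : 1 ≤ b) {ι : Type*} (F : Finset ι) (m : ι → ℕ)
    (hF : #{r ∈ F | 0 < m r} ≤ b) :
    ∃ T : Finset ℕ, 0 ∉ T ∧ #T = ∑ r ∈ F, m r ∧
      ∑ j ∈ T, depth b j ≤ ∑ r ∈ F, m r + ∑ r ∈ F, depthSum b (m r) := by
  classical
  obtain ⟨f, hf_inj, hf_lt⟩ := exists_injOn_lt_of_card_le hF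
  set A := F.sigma fun r => range (m r)
  set ψ : (_ : ι) × ℕ → ℕ := fun x => 1 + x.2 * b + f x.1
  have hA : ∀ x ∈ A, x.1 ∈ {r ∈ F | 0 < m r} := fun x hx => by
    rw [mem_sigma, mem_range] at hx
    exact mem_filter.2 ⟨hx.1, by omega⟩
  have hψ : Set.InjOn ψ A := by
    intro x hx y hy hxy
    have hfx := hf_lt _ (hA x hx)
    have hfy := hf_lt _ (hA y hy)
    have hxy' : f x.1 + b * x.2 = f y.1 + b * y.2 := by
      simp only [ψ, mul_comm _ b] at hxy; omega
    have h₂ : x.2 = y.2 := by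
      have := congrArg (· / b) hxy'
      simpa [Nat.add_mul_div_left _ _ (by omega : 0 < b), Nat.div_eq_of_lt hfx,
        Nat.div_eq_of_lt hfy] using this
    have h₁ : x.1 = y.1 := hf_inj (hA x hx) (hA y hy) (by rw [h₂] at hxy'; omega)
    exact Sigma.ext h₁ (heq_of_eq h₂)
  refine ⟨A.image ψ, by simp [ψ], ?_, ?_⟩
  · rw [card_image_of_injOn hψ, card_sigma]
    simp
  calc ∑ j ∈ A.image ψ, depth b j
      = ∑ r ∈ F, ∑ i ∈ range (m r), depth b (1 + i * b + f r) := by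
        rw [sum_image hψ, sum_sigma]
    _ ≤ ∑ r ∈ F, ∑ i ∈ range (m r), (depth b i + 1) := by
        gcongr with r hr i hi
        exact depth_child_le hb i (hf_lt r (mem_filter.2 ⟨hr, by simp at hi; omega⟩))
    _ = ∑ r ∈ F, m r + ∑ r ∈ F, depthSum b (m r) := by
        simp [sum_add_distrib, depthSum, add_comm]

lemma depthSum_le_add_sum_depthSum (hb : 1 ≤ b) {ι : Type*} (F : Finset ι) (m : ι → ℕ)
    (hF : #{r ∈ F | 0 < m r} ≤ b) {N : ℕ} (hN₁ : ∑ r ∈ F, m r ≤ N)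
    (hN₂ : N ≤ ∑ r ∈ F, m r + 1) :
    depthSum b N ≤ N + ∑ r ∈ F, depthSum b (m r) := by
  obtain ⟨T, h0, hcard, hsum⟩ := exists_nodes_below_root hb F m hF
  rcases hN₁.eq_or_lt with rfl | hlt
  · calc depthSum b (∑ r ∈ F, m r) = ∑ j ∈ range #T, depth b j := by rw [hcard, depthSum]
      _ ≤ ∑ j ∈ T, depth b j := sum_range_card_le_sum (depth_mono hb) T
      _ ≤ _ := hsum
  · calc depthSum b N = ∑ j ∈ range #(insert 0 T), depth b j := by
          rw [card_insert_of_notMem h0, hcard, depthSum]; congr; omega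
      _ ≤ ∑ j ∈ insert 0 T, depth b j := sum_range_card_le_sum (depth_mono hb) _
      _ = 1 + ∑ j ∈ T, depth b j := by rw [sum_insert h0, depth_zero]
      _ ≤ N + ∑ r ∈ F, depthSum b (m r) := by omega

end CompleteTree

open CompleteTree in
theorem Bound_eq_depthSum {b : ℕ} (hb : 1 ≤ b) (n : ℕ) : Bound n b = depthSum b n := by
  rw [Bound]
  split_ifs with hn hb1
  · simp [hn, depthSum]
  · rw [hb1, depthSum_one]
  set t := Nat.log b (n * (b - 1) + 1)
  have hdepth : depth b n = t + 1 := by rw [depth, if_neg hb1]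
  have h₁ : nodesUpTo b t ≤ n :=
    not_lt.1 fun h => by simpa [hdepth] using (depth_le_iff hb).2 h
  have h₂ : n ≤ nodesUpTo b (t + 1) := (hdepth ▸ lt_nodesUpTo_depth hb n).le
  rw [depthSum_eq_add hb h₁ h₂, depthSum_nodesUpTo hb, ← Nat.geomSum_eq (by omega), ← nodesUpTo]

open CompleteTree in
theorem Bound_anti_right {b b' : ℕ} (hb' : 1 ≤ b') (h : b' ≤ b) (n : ℕ) :
    Bound n b ≤ Bound n b' := by
  rw [Bound_eq_depthSum (hb'.trans h), Bound_eq_depthSum hb']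
  exact sum_le_sum fun j _ => depth_anti_left hb' h j

namespace GuessingGame

open CompleteTree

variable {α ρ : Type*} [DecidableEq α] [DecidableEq ρ] (gm : GuessingGame α ρ)
  {C : Finset α} {g : α}

lemma split_subset (C : Finset α) (g : α) (r : ρ) : gm.split C g r ⊆ C :=
  filter_subset _ _

lemma sum_card_split (hg : g ∈ gm.G) (hCS : C ⊆ gm.S) :
    ∑ r ∈ gm.R, #(gm.split C g r) = #C :=
  (card_eq_sum_card_fiberwise fun c hc => gm.ans_mem g hg c (hCS hc)).symm

lemma card_split_rstar_le_one (hg : g ∈ gm.G) (hCS : C ⊆ gm.S) :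
    #(gm.split C g gm.rstar) ≤ 1 := by
  refine card_le_one.2 fun c hc c' hc' => ?_
  rw [split, mem_filter] at hc hc'
  exact ((gm.ans_eq_rstar_iff g hg c (hCS hc.1)).1 hc.2).symm.trans
    ((gm.ans_eq_rstar_iff g hg c' (hCS hc'.1)).1 hc'.2)

lemma nSplits_mono {C' : Finset α} (h : C' ⊆ C) (g : α) : gm.nSplits g C' ≤ gm.nSplits g C :=
  card_le_card <| monotone_filter_right _ fun _ _ => Nonempty.mono (filter_subset_filter _ h)

lemma nSplits_le_MaxSplits (hg : g ∈ gm.G) : gm.nSplits g C ≤ gm.MaxSplits C :=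
  le_sup (f := fun g => gm.nSplits g C) hg

lemma MaxSplits_mono {C' : Finset α} (h : C' ⊆ C) : gm.MaxSplits C' ≤ gm.MaxSplits C :=
  sup_mono_fun fun g _ => gm.nSplits_mono h g

lemma one_le_nSplits (hg : g ∈ gm.G) (hCS : C ⊆ gm.S) (hC : C.Nonempty) :
    1 ≤ gm.nSplits g C := by
  obtain ⟨c, hc⟩ := hC
  exact card_pos.2
    ⟨gm.ans g c, mem_filter.2 ⟨gm.ans_mem g hg c (hCS hc), c, mem_filter.2 ⟨hc, rfl⟩⟩⟩

lemma one_le_MaxSplits (hCS : C ⊆ gm.S) (hC : C.Nonempty) : 1 ≤ gm.MaxSplits C := by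
  obtain ⟨c, hc⟩ := hC
  have hcG := gm.S_subset_G (hCS hc)
  exact (gm.one_le_nSplits hcG hCS ⟨c, hc⟩).trans (gm.nSplits_le_MaxSplits hcG)

lemma card_filter_split_pos_le_nSplits (g : α) (C : Finset α) :
    #{r ∈ gm.R.erase gm.rstar | 0 < #(gm.split C g r)} ≤ gm.nSplits g C :=
  card_le_card fun r hr => by
    rw [mem_filter, mem_erase, card_pos] at hr
    exact mem_filter.2 ⟨hr.1.2, hr.2⟩

lemma Bound_le_card_add_sum_split (hg : g ∈ gm.G) (hCS : C ⊆ gm.S) {b : ℕ} (hb : 1 ≤ b)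
    (hgb : gm.nSplits g C ≤ b) :
    Bound #C b ≤ #C + ∑ r ∈ gm.R.erase gm.rstar, Bound #(gm.split C g r) b := by
  have hsum := sum_erase_add gm.R (fun r => #(gm.split C g r)) gm.rstar_mem
  rw [gm.sum_card_split hg hCS] at hsum
  have hrstar := gm.card_split_rstar_le_one hg hCS
  simp only [Bound_eq_depthSum hb]
  exact depthSum_le_add_sum_depthSum hb _ _
    ((gm.card_filter_split_pos_le_nSplits g C).trans hgb) (by omega) (by omega)

lemma mem_G_of_mem_UG (hCS : C ⊆ gm.S) (hg : g ∈ gm.UG C) : g ∈ gm.G := by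
  unfold UG at hg
  split_ifs at hg
  · exact (mem_filter.1 hg).1
  · exact gm.S_subset_G (hCS hg)

lemma UG_nonempty (hCS : C ⊆ gm.S) (hC : C.Nonempty) : (gm.UG C).Nonempty := by
  obtain ⟨c, hc⟩ := hC
  unfold UG
  split_ifs with h
  · obtain ⟨c', hc', hne⟩ := exists_mem_ne h c
    have hcG := gm.S_subset_G (hCS hc)
    have hrc : gm.ans c c ≠ gm.ans c c' := by
      rw [(gm.ans_eq_rstar_iff c hcG c (hCS hc)).2 rfl, ne_comm,
        Ne, gm.ans_eq_rstar_iff c hcG c' (hCS hc')]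
      exact hne.symm
    refine ⟨c, mem_filter.2 ⟨hcG, (one_lt_card.2 ?_).ne'⟩⟩
    exact ⟨_, mem_filter.2 ⟨gm.ans_mem c hcG c (hCS hc), c, mem_filter.2 ⟨hc, rfl⟩⟩,
      _, mem_filter.2 ⟨gm.ans_mem c hcG c' (hCS hc'), c', mem_filter.2 ⟨hc', rfl⟩⟩, hrc⟩
  · exact ⟨c, hc⟩

lemma split_ssubset (hCS : C ⊆ gm.S) (hg : g ∈ gm.UG C) {r : ρ} (hr : r ≠ gm.rstar) :
    gm.split C g r ⊂ C := by
  refine (gm.split_subset C g r).ssubset_of_ne fun h => ?_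
  have hall : ∀ c ∈ C, gm.ans g c = r := fun c hc =>
    (mem_filter.1 (h.symm ▸ hc : c ∈ gm.split C g r)).2
  unfold UG at hg
  split_ifs at hg with hC
  · obtain ⟨hgG, hne⟩ := mem_filter.1 hg
    obtain ⟨c, hc⟩ := card_pos.1 (by omega : 0 < #C)
    refine hne (card_eq_one.2 ⟨r, eq_singleton_iff_unique_mem.2 ⟨?_, ?_⟩⟩)
    · exact mem_filter.2 ⟨hall c hc ▸ gm.ans_mem g hgG c (hCS hc), c, h.symm ▸ hc⟩
    · rintro r' hr'
      obtain ⟨c', hc'⟩ := (mem_filter.1 hr').2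
      rw [split, mem_filter] at hc'
      exact hc'.2.symm.trans (hall c' hc'.1)
  · exact hr ((hall g hg).symm.trans
      ((gm.ans_eq_rstar_iff g (gm.S_subset_G (hCS hg)) g (hCS hg)).2 rfl))

lemma le_sInf_image_UG (hCS : C ⊆ gm.S) (hC : C.Nonempty) {φ : α → ℕ} {x : ℕ}
    (h : ∀ g ∈ gm.UG C, x ≤ φ g) : x ≤ sInf (((gm.UG C).image φ : Finset ℕ) : Set ℕ) := by
  refine le_csInf (coe_nonempty.2 ((gm.UG_nonempty hCS hC).image φ)) ?_
  rintro _ hy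
  obtain ⟨g, hg, rfl⟩ := mem_image.1 (mem_coe.1 hy)
  exact h g hg

lemma LB_empty (n : ℕ) : gm.LB n ∅ = 0 := by
  match n with
  | 0 | 1 | 2 => simp [LB, Bound]
  | n + 3 => rw [LB, if_pos rfl]

lemma LB_add_three_le_V (hg : g ∈ gm.UG C) (n : ℕ) : gm.LB (n + 3) C ≤ gm.V (n + 1) g C := by
  rw [LB]
  split_ifs
  · exact Nat.zero_le _
  · exact Nat.sInf_le (mem_coe.2 (mem_image_of_mem _ hg))

lemma LB_le_LB_add_two_of_forall (hCS : C ⊆ gm.S) {n : ℕ}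
    (h : C.Nonempty → ∀ g ∈ gm.UG C, gm.LB (n + 1) C ≤ gm.V (n + 1) g C) :
    gm.LB (n + 1) C ≤ gm.LB (n + 3) C := by
  rcases C.eq_empty_or_nonempty with rfl | hC
  · simp [LB_empty]
  rw [LB, if_neg hC.ne_empty]
  exact gm.le_sInf_image_UG hCS hC (h hC)

lemma LB_one_le_V_one (hCS : C ⊆ gm.S) (hC : C.Nonempty) (hg : g ∈ gm.G) :
    gm.LB 1 C ≤ gm.V 1 g C :=
  gm.Bound_le_card_add_sum_split hg hCS (gm.one_le_MaxSplits le_rfl (hC.mono hCS))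
    ((gm.nSplits_mono hCS g).trans (gm.nSplits_le_MaxSplits hg))

lemma LB_two_le_V_two (hCS : C ⊆ gm.S) (hC : C.Nonempty) (hg : g ∈ gm.G) :
    gm.LB 2 C ≤ gm.V 2 g C := by
  refine (gm.Bound_le_card_add_sum_split hg hCS (gm.one_le_MaxSplits hCS hC)
    (gm.nSplits_le_MaxSplits hg)).trans (Nat.add_le_add_left (sum_le_sum fun r _ => ?_) _)
  rcases (gm.split C g r).eq_empty_or_nonempty with hr | hr
  · simp [hr, LB, Bound]
  · exact Bound_anti_right (gm.one_le_MaxSplits ((gm.split_subset C g r).trans hCS) hr)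
      (gm.MaxSplits_mono (gm.split_subset C g r)) _

theorem LB_le_LB_add_two :
    ∀ (n : ℕ) {C : Finset α}, C ⊆ gm.S → gm.LB (n + 1) C ≤ gm.LB (n + 3) C
  | 0, _, hCS => gm.LB_le_LB_add_two_of_forall hCS fun hC _ hg =>
      gm.LB_one_le_V_one hCS hC (gm.mem_G_of_mem_UG hCS hg)
  | 1, _, hCS => gm.LB_le_LB_add_two_of_forall hCS fun hC _ hg =>
      gm.LB_two_le_V_two hCS hC (gm.mem_G_of_mem_UG hCS hg)
  | n + 2, C, hCS => gm.LB_le_LB_add_two_of_forall hCS fun _ g hg =>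
      (gm.LB_add_three_le_V hg n).trans <| Nat.add_le_add_left (sum_le_sum fun r _ =>
        LB_le_LB_add_two n ((gm.split_subset C g r).trans hCS)) _

theorem LB_le_MinTotalAux : ∀ (f : ℕ) {C : Finset α}, C ⊆ gm.S → #C ≤ f →
    ∀ n, gm.LB (n + 1) C ≤ gm.MinTotalAux f C
  | 0, C, _, hf, n => by simp [card_eq_zero.1 (Nat.le_zero.1 hf), LB_empty]
  | f + 1, C, hCS, hf, n => by
    rcases C.eq_empty_or_nonempty with rfl | hC
    · simp [LB_empty]
    refine (gm.LB_le_LB_add_two n hCS).trans ?_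
    rw [MinTotalAux, if_neg hC.ne_empty]
    refine gm.le_sInf_image_UG hCS hC fun g hg => (gm.LB_add_three_le_V hg n).trans ?_
    refine Nat.add_le_add_left (sum_le_sum fun r hr => ?_) _
    have hlt := card_lt_card (gm.split_ssubset hCS hg (ne_of_mem_erase hr))
    exact LB_le_MinTotalAux f ((gm.split_subset C g r).trans hCS) (by omega) n

theorem LB_le_MinTotal (hCS : C ⊆ gm.S) (n : ℕ) : gm.LB (n + 1) C ≤ gm.MinTotal C :=
  gm.LB_le_MinTotalAux _ hCS le_rfl n

end GuessingGame

section Statements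

open GuessingGame

variable {α ρ : Type*} [DecidableEq α] [DecidableEq ρ]

theorem statement_17_general (gm : GuessingGame α ρ) (n : ℕ) (hn : 1 ≤ n)
    (g : α) (C : Finset α) (hCS : C ⊆ gm.S) :
    gm.V n g C ≤ gm.V (n + 2) g C ∧ gm.V (n + 2) g C ≤ gm.Vstar g C := by
  obtain ⟨n, rfl⟩ := Nat.exists_eq_add_of_le' hn
  have hsplit : ∀ r, gm.split C g r ⊆ gm.S := fun r => (gm.split_subset C g r).trans hCS
  exact ⟨Nat.add_le_add_left (sum_le_sum fun r _ => gm.LB_le_LB_add_two n (hsplit r)) _,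
    Nat.add_le_add_left (sum_le_sum fun r _ => gm.LB_le_MinTotal (hsplit r) (n + 2)) _⟩

theorem statement_17 (gm : GuessingGame α ρ) (n : ℕ) (hn : 1 ≤ n)
    (g : α) (hg : g ∈ gm.G) (C : Finset α) (hCS : C ⊆ gm.S) :
    gm.V n g C ≤ gm.V (n + 2) g C ∧ gm.V (n + 2) g C ≤ gm.Vstar g C :=
  statement_17_general gm n hn g C hCS

end Statements
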